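/- For every integer n ≥ 0: ∑_{j=0}^{∞} q^{j^2} [2n - j choose j]_q = ∑_{j=-∞}^{∞} (-1)^j q^{j(5j+1)/2} [2n choose ⌊n - 5j/2⌋]_q. -/

import Mathlib

open Finset

noncomputable section

abbrev F := RatFunc ℚ

/-- The variable `q`, a transcendental element. -/
def q : F := RatFunc.X

/-- `(b;b)_n = ∏_{i=1}^n (1 - b^i)` -/
def pq (b : F) (n : ℕ) : F := ∏ i ∈ Finset.range n, (1 - b ^ (i + 1))

/-- Gaussian binomial coefficient in base `b`, zero when `k < 0` or `k > a`. -/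
def qbin (b : F) (a k : ℤ) : F :=
  if 0 ≤ k ∧ k ≤ a then pq b a.toNat / (pq b k.toNat * pq b (a - k).toNat) else 0

/-- Primed Gaussian binomial: equals 1 when `a < 0` and `k = 0`. -/
def qbin' (b : F) (a k : ℤ) : F :=
  if a < 0 ∧ k = 0 then 1 else qbin b a k

/-!
Both sides, read as functions `e m` of an arbitrary length `m ≥ 0` (the theorem is the case
`m = 2n`), satisfy `e m = e (m - 1) + q ^ (m - 1) * e (m - 2)` with `e 0 = e 1 = 1`.
On the left (Schur's polynomial) this is Pascal's rule `[a, k] = q^(a-k) [a-1, k-1] + [a-1, k]`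
applied termwise. On the right, applying the two Pascal rules to the `j`-th term leaves a defect
that depends on the parity of `m - 5j`; since that parity alternates with `j`, the defects
combine into a telescoping difference `G j - G (j + 1)` and sum to zero.
-/

lemma q_ne_zero : q ≠ 0 := RatFunc.X_ne_zero

lemma q_pow_ne_one {n : ℕ} (hn : n ≠ 0) : q ^ n ≠ 1 := by
  have hX : (Polynomial.X ^ n : Polynomial ℚ) ≠ 1 := fun h => by
    simpa [hn] using congrArg Polynomial.natDegree h
  simpa [q, ← RatFunc.algebraMap_X, ← map_pow] using
    (RatFunc.algebraMap_injective ℚ).ne hX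

lemma pq_q_ne_zero (n : ℕ) : pq q n ≠ 0 :=
  Finset.prod_ne_zero_iff.2 fun _ _ => sub_ne_zero.2 (q_pow_ne_one (Nat.succ_ne_zero _)).symm

section GaussianBinomial

variable {b : F}

lemma pq_succ (b : F) (n : ℕ) : pq b (n + 1) = pq b n * (1 - b ^ (n + 1)) :=
  Finset.prod_range_succ _ _

lemma pq_zero (b : F) : pq b 0 = 1 :=
  Finset.prod_range_zero _

lemma qbin_eq_zero {a k : ℤ} (h : ¬(0 ≤ k ∧ k ≤ a)) : qbin b a k = 0 :=
  if_neg h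

lemma qbin_eq_zero_of_neg {a k : ℤ} (hk : k < 0) : qbin b a k = 0 :=
  qbin_eq_zero (by omega)

lemma qbin_eq_zero_of_lt {a k : ℤ} (h : a < k) : qbin b a k = 0 :=
  qbin_eq_zero (by omega)

lemma qbin_natCast {a k : ℕ} (h : k ≤ a) :
    qbin b a k = pq b a / (pq b k * pq b (a - k)) := by
  rw [qbin, if_pos (by omega), show ((a : ℤ) - k).toNat = a - k by omega]
  rfl

lemma qbin_sub_self (a k : ℤ) : qbin b a (a - k) = qbin b a k := by
  unfold qbin
  by_cases h : 0 ≤ k ∧ k ≤ a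
  · rw [if_pos (by omega), if_pos h, sub_sub_cancel, mul_comm]
  · rw [if_neg (by omega), if_neg h]

variable (hb : ∀ n, pq b n ≠ 0)
include hb

lemma one_sub_pow_succ_ne_zero (n : ℕ) : 1 - b ^ (n + 1) ≠ 0 :=
  right_ne_zero_of_mul (pq_succ b n ▸ hb (n + 1))

lemma qbin_zero {a : ℤ} (ha : 0 ≤ a) : qbin b a 0 = 1 := by
  rw [qbin, if_pos ⟨le_rfl, ha⟩, sub_zero, Int.toNat_zero, pq_zero, one_mul,
    div_self (hb _)]

lemma qbin_self {a : ℤ} (ha : 0 ≤ a) : qbin b a a = 1 := by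
  rw [← qbin_sub_self, sub_self, qbin_zero hb ha]

lemma qbin_natCast_pascal (i j : ℕ) :
    qbin b (i + j + 2 : ℕ) (i + 1 : ℕ) =
      qbin b (i + j + 1 : ℕ) i +
        b ^ ((i + 1 : ℕ) : ℤ) * qbin b (i + j + 1 : ℕ) (i + 1 : ℕ) := by
  rw [zpow_natCast, qbin_natCast (by omega), qbin_natCast (by omega), qbin_natCast (by omega),
    show i + j + 2 - (i + 1) = j + 1 by omega, show i + j + 1 - i = j + 1 by omega,
    show i + j + 1 - (i + 1) = j by omega, pq_succ b (i + j + 1), pq_succ b i, pq_succ b j]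
  have hi := hb i
  have hj := hb j
  have hi' := one_sub_pow_succ_ne_zero hb i
  have hj' := one_sub_pow_succ_ne_zero hb j
  field_simp
  ring

lemma qbin_pascal {a k : ℤ} (h : 0 < a ∨ 0 < k) :
    qbin b a k = qbin b (a - 1) (k - 1) + b ^ k * qbin b (a - 1) k := by
  rcases lt_or_ge a k with hak | hka
  · rw [qbin_eq_zero_of_lt hak, qbin_eq_zero_of_lt (by omega), qbin_eq_zero_of_lt (by omega)]
    ring
  rcases lt_trichotomy k 0 with hk | rfl | hk
  · rw [qbin_eq_zero_of_neg hk, qbin_eq_zero_of_neg (by omega), qbin_eq_zero_of_neg hk]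
    ring
  · rw [qbin_zero hb hka, qbin_eq_zero_of_neg (by omega), qbin_zero hb (by omega), zpow_zero]
    ring
  rcases hka.eq_or_lt with rfl | hka
  · rw [qbin_self hb hk.le, qbin_self hb (by omega), qbin_eq_zero_of_lt (by omega)]
    ring
  obtain ⟨i, rfl⟩ : ∃ i : ℕ, k = i + 1 := ⟨(k - 1).toNat, by omega⟩
  obtain ⟨j, rfl⟩ : ∃ j : ℕ, a = i + j + 2 := ⟨(a - i - 2).toNat, by omega⟩
  convert qbin_natCast_pascal hb i j using 3 <;> push_cast <;> ring_nf

lemma qbin_pascal' {a k : ℤ} (h : 0 < a ∨ 0 < k) :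
    qbin b a k = b ^ (a - k) * qbin b (a - 1) (k - 1) + qbin b (a - 1) k := by
  rcases le_or_gt a 0 with ha | ha
  · rw [qbin_eq_zero_of_lt (by omega), qbin_eq_zero_of_lt (by omega),
      qbin_eq_zero_of_lt (by omega)]
    ring
  rw [← qbin_sub_self, qbin_pascal hb (.inl ha), ← qbin_sub_self (a - 1) k,
    ← qbin_sub_self (a - 1) (k - 1)]
  ring_nf

end GaussianBinomial

lemma finsum_eq_finsum_succ {M : Type*} [AddCommMonoid M] {f : ℕ → M} (h0 : f 0 = 0) :
    ∑ᶠ n, f n = ∑ᶠ n, f (n + 1) := by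
  rw [← finsum_mem_range Nat.succ_injective, finsum_mem_def, Set.indicator_eq_self.2]
  rintro (_ | n) hn
  · exact absurd h0 hn
  · exact ⟨n, rfl⟩

lemma finsum_sub_add_one_eq_zero {M : Type*} [AddCommGroup M] {f : ℤ → M}
    (hf : f.HasFiniteSupport) : ∑ᶠ j, (f j - f (j + 1)) = 0 := by
  rw [finsum_sub_distrib hf (hf.fun_comp_of_injective (add_left_injective 1)), sub_eq_zero]
  exact (finsum_comp_equiv (Equiv.addRight 1)).symm

def schurTerm (m : ℤ) (j : ℕ) : F := q ^ (j ^ 2) * qbin q (m - j) j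

def schurSum (m : ℤ) : F := ∑ᶠ j, schurTerm m j

lemma hasFiniteSupport_schurTerm (m : ℤ) : (schurTerm m).HasFiniteSupport := by
  refine (Set.finite_Iic m.toNat).subset fun j hj => ?_
  by_contra hjm
  rw [Set.mem_Iic, not_le] at hjm
  exact hj (by rw [schurTerm, qbin_eq_zero_of_lt (by omega), mul_zero])

lemma schurTerm_zero {m : ℤ} (hm : 0 ≤ m) : schurTerm m 0 = 1 := by
  rw [schurTerm, Nat.cast_zero, sub_zero, qbin_zero pq_q_ne_zero hm]
  ring

lemma schurTerm_succ (m : ℤ) (j : ℕ) :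
    schurTerm m (j + 1) = schurTerm (m - 1) (j + 1) + q ^ (m - 1) * schurTerm (m - 2) j := by
  simp only [schurTerm]
  rw [qbin_pascal' pq_q_ne_zero (.inr (by omega))]
  have hexp : (q : F) ^ ((j + 1) ^ 2) * q ^ (m - (j + 1 : ℕ) - (j + 1 : ℕ)) =
      q ^ (m - 1) * q ^ (j ^ 2) := by
    rw [← zpow_natCast, ← zpow_natCast, ← zpow_add₀ q_ne_zero, ← zpow_add₀ q_ne_zero]
    congr 1
    push_cast
    ring
  have hbin : qbin q (m - (j + 1 : ℕ) - 1) ((j + 1 : ℕ) - 1) = qbin q (m - 2 - j) j := by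
    congr 1 <;> push_cast <;> ring
  rw [hbin, show m - (j + 1 : ℕ) - 1 = m - 1 - (j + 1 : ℕ) by ring]
  linear_combination qbin q (m - 2 - j) j * hexp

lemma schurSum_rec {m : ℤ} (hm : 1 ≤ m) :
    schurSum m = schurSum (m - 1) + q ^ (m - 1) * schurSum (m - 2) := by
  rw [← sub_eq_iff_eq_add', schurSum, schurSum, schurSum, ← finsum_sub_distrib
    (hasFiniteSupport_schurTerm m) (hasFiniteSupport_schurTerm (m - 1)),
    finsum_eq_finsum_succ (by rw [schurTerm_zero (by omega), schurTerm_zero (by omega), sub_self]),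
    mul_finsum]
  exact finsum_congr fun j => by rw [schurTerm_succ, add_sub_cancel_left]

lemma schurSum_zero : schurSum 0 = 1 := by
  rw [schurSum, finsum_eq_single _ 0, schurTerm_zero le_rfl]
  intro j hj
  rw [schurTerm, qbin_eq_zero_of_lt (by omega), mul_zero]

lemma schurSum_one : schurSum 1 = 1 := by
  rw [schurSum, finsum_eq_single _ 0, schurTerm_zero zero_le_one]
  intro j hj
  rw [schurTerm, qbin_eq_zero_of_lt (by omega), mul_zero]

def andrewsTerm (m j : ℤ) : F := (-1) ^ j * q ^ (j * (5 * j + 1) / 2) * qbin q m ((m - 5 * j) / 2)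

def andrewsSum (m : ℤ) : F := ∑ᶠ j, andrewsTerm m j

def andrewsTelescope (m j : ℤ) : F :=
  if Even (m - 5 * j) then
    (-1) ^ j * q ^ (j * (5 * j + 1) / 2 + (m - 5 * j) / 2) * qbin q (m - 2) ((m - 5 * j) / 2)
  else 0

lemma hasFiniteSupport_andrewsTerm (m : ℤ) : (andrewsTerm m).HasFiniteSupport := by
  refine (Set.finite_Icc (-m - 1) (m + 1)).subset fun j hj => ?_
  by_contra hjm
  rw [Set.mem_Icc] at hjm
  exact hj (by rw [andrewsTerm, qbin_eq_zero (by omega), mul_zero])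

lemma hasFiniteSupport_andrewsTelescope (m : ℤ) : (andrewsTelescope m).HasFiniteSupport := by
  refine (Set.finite_Icc (-m - 1) (m + 1)).subset fun j hj => ?_
  by_contra hjm
  rw [Set.mem_Icc] at hjm
  exact hj (by rw [andrewsTelescope, qbin_eq_zero (by omega), mul_zero, ite_self])

lemma andrewsTerm_rec_of_even {m j k : ℤ} (hm : 2 ≤ m) (hk : m - 5 * j = 2 * k) :
    andrewsTerm m j - andrewsTerm (m - 1) j - q ^ (m - 1) * andrewsTerm (m - 2) j =
      (-1) ^ j * q ^ (j * (5 * j + 1) / 2 + k) * qbin q (m - 2) k := by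
  simp only [andrewsTerm]
  rw [show (m - 5 * j) / 2 = k by omega, show (m - 1 - 5 * j) / 2 = k - 1 by omega,
    show (m - 2 - 5 * j) / 2 = k - 1 by omega, qbin_pascal pq_q_ne_zero (.inl (by omega)),
    qbin_pascal' pq_q_ne_zero (a := m - 1) (k := k) (.inl (by omega)),
    show m - 1 - 1 = m - 2 by ring,
    zpow_add₀ q_ne_zero]
  have hexp : (q : F) ^ k * q ^ (m - 1 - k) = q ^ (m - 1) := by
    rw [← zpow_add₀ q_ne_zero, add_sub_cancel]
  linear_combination (-1) ^ j * q ^ (j * (5 * j + 1) / 2) * qbin q (m - 2) (k - 1) * hexp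

lemma andrewsTerm_rec_of_odd {m j k : ℤ} (hm : 2 ≤ m) (hk : m - 5 * j = 2 * k + 1) :
    andrewsTerm m j - andrewsTerm (m - 1) j - q ^ (m - 1) * andrewsTerm (m - 2) j =
      -((-1) ^ (j + 1) * q ^ ((j + 1) * (5 * (j + 1) + 1) / 2 + (k - 2)) *
        qbin q (m - 2) (k - 2)) := by
  simp only [andrewsTerm]
  rw [show (m - 5 * j) / 2 = k by omega, show (m - 1 - 5 * j) / 2 = k by omega,
    show (m - 2 - 5 * j) / 2 = k - 1 by omega, qbin_pascal' pq_q_ne_zero (.inl (by omega)),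
    qbin_pascal pq_q_ne_zero (a := m - 1) (k := k - 1) (.inl (by omega)),
    show m - 1 - 1 = m - 2 by ring, show k - 1 - 1 = k - 2 by ring,
    show (j + 1) * (5 * (j + 1) + 1) = j * (5 * j + 1) + (5 * j + 3) * 2 by ring,
    Int.add_mul_ediv_right _ _ two_ne_zero, zpow_add_one₀ (by norm_num), zpow_add₀ q_ne_zero,
    zpow_add₀ q_ne_zero]
  have hexp₁ : (q : F) ^ (m - k) * q ^ (k - 1) = q ^ (m - 1) := by
    rw [← zpow_add₀ q_ne_zero]; congr 1; ring
  have hexp₂ : (q : F) ^ (5 * j + 3) * q ^ (k - 2) = q ^ (m - k) := by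
    rw [← zpow_add₀ q_ne_zero]; congr 1; omega
  linear_combination (-1) ^ j * q ^ (j * (5 * j + 1) / 2) *
    (qbin q (m - 2) (k - 1) * hexp₁ - qbin q (m - 2) (k - 2) * hexp₂)

lemma andrewsTerm_rec {m : ℤ} (hm : 2 ≤ m) (j : ℤ) :
    andrewsTerm m j - andrewsTerm (m - 1) j - q ^ (m - 1) * andrewsTerm (m - 2) j =
      andrewsTelescope m j - andrewsTelescope m (j + 1) := by
  obtain ⟨k, hk | hk⟩ := Int.even_or_odd' (m - 5 * j)
  · rw [andrewsTerm_rec_of_even hm hk, andrewsTelescope, andrewsTelescope,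
      if_pos ⟨k, by omega⟩, if_neg (by rw [Int.not_even_iff_odd]; exact ⟨k - 3, by omega⟩),
      show (m - 5 * j) / 2 = k by omega, sub_zero]
  · rw [andrewsTerm_rec_of_odd hm hk, andrewsTelescope, andrewsTelescope,
      if_neg (by rw [Int.not_even_iff_odd]; exact ⟨k, hk⟩), if_pos ⟨k - 2, by omega⟩,
      show (m - 5 * (j + 1)) / 2 = k - 2 by omega, zero_sub]

lemma andrewsSum_rec {m : ℤ} (hm : 2 ≤ m) :
    andrewsSum m = andrewsSum (m - 1) + q ^ (m - 1) * andrewsSum (m - 2) := by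
  have key := finsum_sub_add_one_eq_zero (hasFiniteSupport_andrewsTelescope m)
  rw [← finsum_congr (andrewsTerm_rec hm),
    finsum_sub_distrib ((hasFiniteSupport_andrewsTerm m).fun_sub (hasFiniteSupport_andrewsTerm _))
      ((hasFiniteSupport_andrewsTerm _).fun_mul_right _),
    finsum_sub_distrib (hasFiniteSupport_andrewsTerm m) (hasFiniteSupport_andrewsTerm _),
    ← mul_finsum] at key
  rw [andrewsSum, andrewsSum, andrewsSum]
  linear_combination key

lemma andrewsSum_zero : andrewsSum 0 = 1 := by
  rw [andrewsSum, finsum_eq_single _ 0]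
  · simp [andrewsTerm, qbin_zero pq_q_ne_zero le_rfl]
  intro j hj
  rw [andrewsTerm, qbin_eq_zero (by omega), mul_zero]

lemma andrewsSum_one : andrewsSum 1 = 1 := by
  rw [andrewsSum, finsum_eq_single _ 0]
  · simp [andrewsTerm, qbin_zero pq_q_ne_zero zero_le_one]
  intro j hj
  rw [andrewsTerm, qbin_eq_zero (by omega), mul_zero]

lemma schurSum_eq_andrewsSum (m : ℕ) : schurSum m = andrewsSum m := by
  induction m using Nat.twoStepInduction with
  | zero => rw [Nat.cast_zero, schurSum_zero, andrewsSum_zero]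
  | one => rw [Nat.cast_one, schurSum_one, andrewsSum_one]
  | more m ih₀ ih₁ =>
    have h₁ : ((m + 2 : ℕ) : ℤ) - 1 = (m + 1 : ℕ) := by push_cast; ring
    have h₂ : ((m + 2 : ℕ) : ℤ) - 2 = m := by push_cast; ring
    rw [schurSum_rec (by omega), andrewsSum_rec (by omega), h₁, h₂, ih₀, ih₁]

theorem stmt8 (n : ℕ) :
    (∑ᶠ j : ℕ, q ^ (j ^ 2) * qbin q (2 * (n : ℤ) - j) (j : ℤ)) =
      ∑ᶠ j : ℤ, (-1 : F) ^ j * q ^ (j * (5 * j + 1) / 2) *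
        qbin q (2 * (n : ℤ)) ((2 * (n : ℤ) - 5 * j).fdiv 2) := by
  have h := schurSum_eq_andrewsSum (2 * n)
  push_cast at h
  simp only [Int.fdiv_eq_ediv_of_nonneg _ zero_le_two]
  exact h
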